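/- arXiv:2506.21082 — 2 statements merged into one kernel-verified Lean document; each statement's English description precedes it below -/
import Mathlib

section
/- Equational criterion of flatness: a module M over a ring R is flat if and only if every relation ∑ c_l x_l = 0 with c_l ∈ R, x_l ∈ M can be trivialized, i.e., there exist elements y_j ∈ M and a_{lj} ∈ R with x_l = ∑_j a_{lj} y_j and ∑_l c_l a_{lj} = 0 for all j. -/
open TensorProduct LinearMap Function Submodule Finsupp

section Aux
variable {R : Type*} [CommRing R] {M : Type*} [AddCommGroup M] [Module R M]
  {N : Type*} [AddCommGroup N] [Module R N]

/-- Reindex a finite trivialization to a `Fin`-indexed one. -/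
lemma triv_reindex {ι : Type*} [Fintype ι] {m : ι → M} {n : ι → N}
    {κ : Type*} [Fintype κ] (a : ι → κ → R) (y : κ → N)
    (h1 : ∀ i, n i = ∑ j, a i j • y j) (h2 : ∀ j, ∑ i, a i j • m i = 0) :
    ∃ (r : ℕ) (a' : ι → Fin r → R) (y' : Fin r → N),
      (∀ i, n i = ∑ j, a' i j • y' j) ∧ ∀ j, ∑ i, a' i j • m i = 0 := by
  refine ⟨Fintype.card κ, fun i j ↦ a i ((Fintype.equivFin κ).symm j),
    fun j ↦ y ((Fintype.equivFin κ).symm j), fun i ↦ ?_, fun j ↦ h2 _⟩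
  rw [h1 i]
  exact (Equiv.sum_comp (Fintype.equivFin κ).symm fun k ↦ a i k • y k).symm

/-- Universe-polymorphic port of `TensorProduct.vanishesTrivially_of_sum_tmul_eq_zero`. -/
lemma vt_of_sum_tmul_eq_zero {ι : Type*} [Fintype ι] {m : ι → M} {n : ι → N}
    (hm : Submodule.span R (Set.range m) = ⊤)
    (hmn : ∑ i, m i ⊗ₜ n i = (0 : M ⊗[R] N)) :
    ∃ (r : ℕ) (a : ι → Fin r → R) (y : Fin r → N),
      (∀ i, n i = ∑ j, a i j • y j) ∧ ∀ j, ∑ i, a i j • m i = 0 := by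
  set G : (ι →₀ R) →ₗ[R] M := Finsupp.linearCombination R m with hG
  have G_basis_eq (i : ι) : G (Finsupp.single i 1) = m i := by simp [hG]
  have G_surjective : Surjective G := by
    apply LinearMap.range_eq_top.mp
    apply top_le_iff.mp
    rw [← hm]
    apply Submodule.span_le.mpr
    rintro _ ⟨i, rfl⟩
    use Finsupp.single i 1, G_basis_eq i
  set en : (ι →₀ R) ⊗[R] N := ∑ i, Finsupp.single i 1 ⊗ₜ n i with hen
  have en_mem_ker : en ∈ ker (rTensor N G) := by simp [hen, G_basis_eq, hmn]
  have exact_ker_subtype : Exact (ker G).subtype G := G.exact_subtype_ker_map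
  have exact_rTensor_ker_subtype : Exact (rTensor N (ker G).subtype) (rTensor N G) :=
    rTensor_exact (M := ↥(ker G)) N exact_ker_subtype G_surjective
  have en_mem_range : en ∈ range (rTensor N (ker G).subtype) :=
    exact_rTensor_ker_subtype.linearMap_ker_eq ▸ en_mem_ker
  obtain ⟨kn, hkn⟩ := en_mem_range
  obtain ⟨ma, rfl : kn = ∑ kj ∈ ma, kj.1 ⊗ₜ[R] kj.2⟩ := TensorProduct.exists_finset kn
  refine triv_reindex (κ := ↑↑ma)
    (fun i p ↦ (p.1.1 : ι →₀ R) i) (fun p ↦ p.1.2) (fun i ↦ ?_) ?_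
  · classical
    apply_fun finsuppScalarLeft R N ι at hkn
    apply_fun (· i) at hkn
    symm at hkn
    simp only [map_sum, finsuppScalarLeft_apply_tmul, zero_smul, Finsupp.single_zero,
      Finsupp.sum_single_index, one_smul, Finsupp.finset_sum_apply, Finsupp.single_apply,
      Finset.sum_ite_eq', Finset.mem_univ, ↓reduceIte, rTensor_tmul, coe_subtype, Finsupp.sum_apply,
      Finsupp.sum_ite_eq', Finsupp.mem_support_iff, ne_eq, ite_not, en] at hkn
    simp only [Finset.univ_eq_attach, Finset.sum_attach ma (fun x ↦ (x.1 : ι →₀ R) i • x.2)]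
    convert hkn using 2 with x _
    split
    · next h'x => rw [h'x, zero_smul]
    · rfl
  · rintro ⟨⟨⟨k, hk⟩, _⟩, _⟩
    simpa only [hG, linearCombination_apply, zero_smul, implies_true, Finsupp.sum_fintype] using
      LinearMap.mem_ker.mp hk

/-- Port of `vanishesTrivially_of_sum_tmul_eq_zero_of_rTensor_injective`. -/
lemma vt_of_rTensor_injective {ι : Type*} [Fintype ι] {m : ι → M} {n : ι → N}
    (hm : Injective (rTensor N (span R (Set.range m)).subtype))
    (hmn : ∑ i, m i ⊗ₜ n i = (0 : M ⊗[R] N)) :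
    ∃ (r : ℕ) (a : ι → Fin r → R) (y : Fin r → N),
      (∀ i, n i = ∑ j, a i j • y j) ∧ ∀ j, ∑ i, a i j • m i = 0 := by
  have mem_M' i : m i ∈ span R (Set.range m) := subset_span ⟨i, rfl⟩
  set m' : ι → span R (Set.range m) := Subtype.coind m mem_M' with m'_eq
  have hm' : span R (Set.range m') = ⊤ := by
    apply map_injective_of_injective (injective_subtype (span R (Set.range m)))
    rw [Submodule.map_span, Submodule.map_top, range_subtype, coe_subtype, ← Set.range_comp]
    rfl
  have hm'n : ∑ i, m' i ⊗ₜ n i = (0 : span R (Set.range m) ⊗[R] N) := by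
    apply hm
    simp only [m'_eq, map_sum, rTensor_tmul, coe_subtype, Subtype.coind_coe, _root_.map_zero, hmn]
  obtain ⟨r, a, y, h1, h2⟩ := vt_of_sum_tmul_eq_zero hm' hm'n
  refine ⟨r, a, y, h1, fun j ↦ ?_⟩
  have := congrArg (Submodule.subtype _) (h2 j)
  simpa [m'_eq] using this

end Aux

/-- Equational criterion of flatness: an `R`-module `M` is flat if and only if every
relation `∑ c_l • x_l = 0` (`c_l ∈ R`, `x_l ∈ M`) can be trivialized: there are
`y_j ∈ M` and `a_{lj} ∈ R` with `x_l = ∑_j a_{lj} • y_j` and `∑_l c_l * a_{lj} = 0`. -/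
theorem flat_iff_equational_criterion (R : Type*) [CommRing R] (M : Type*)
    [AddCommGroup M] [Module R M] :
    Module.Flat R M ↔
      ∀ (m : ℕ) (c : Fin m → R) (x : Fin m → M), (∑ l, c l • x l) = 0 →
        ∃ (r : ℕ) (a : Fin m → Fin r → R) (y : Fin r → M),
          (∀ l, x l = ∑ j, a l j • y j) ∧ ∀ j, (∑ l, c l * a l j) = 0 := by
  constructor
  · intro hF m c x h
    have htmul : ∑ l, c l ⊗ₜ x l = (0 : R ⊗[R] M) := by
      apply (TensorProduct.lid R M).injective
      simpa [map_sum] using h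
    have hinj : Injective (rTensor M (span R (Set.range c)).subtype) :=
      Module.Flat.iff_rTensor_injective'.mp hF _
    obtain ⟨r, a, y, h1, h2⟩ := vt_of_rTensor_injective hinj htmul
    exact ⟨r, a, y, h1, fun j ↦ by simpa [smul_eq_mul, mul_comm] using h2 j⟩
  · intro H
    apply Module.Flat.iff_rTensor_injective'.mpr
    intro I
    apply (injective_iff_map_eq_zero _).mpr
    rintro z hz
    obtain ⟨s, rfl⟩ := TensorProduct.exists_finset z
    have hz' : ∑ p ∈ s, (p.1 : R) ⊗ₜ[R] p.2 = (0 : R ⊗[R] M) := by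
      simpa [map_sum] using hz
    have hrel : ∑ p ∈ s, (p.1 : R) • p.2 = (0 : M) := by
      have := congrArg (TensorProduct.lid R M) hz'
      simpa [map_sum] using this
    set e := (Fintype.equivFin ↥s).symm with he
    set c : Fin (Fintype.card ↥s) → R := fun l ↦ ((e l).1.1 : R) with hc
    set x : Fin (Fintype.card ↥s) → M := fun l ↦ (e l).1.2 with hx
    have hrel' : ∑ l, c l • x l = 0 := by
      rw [← hrel, ← Finset.sum_attach s (fun p ↦ (p.1 : R) • p.2)]
      exact Equiv.sum_comp e (fun p ↦ ((p.1).1 : R) • (p.1).2)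
    obtain ⟨r, a, y, h1, h2⟩ := H (Fintype.card ↥s) c x hrel'
    have key : ∀ j, ∑ l, a l j • (e l).1.1 = (0 : I) := by
      intro j
      apply (injective_subtype I)
      have : ((∑ l, a l j • (e l).1.1 : I) : R) = ∑ l, a l j * c l := by
        push_cast [hc]
        simp [smul_eq_mul]
      simp only [Submodule.coe_subtype, ZeroMemClass.coe_zero]
      rw [this]
      simpa [mul_comm] using h2 j
    calc ∑ p ∈ s, p.1 ⊗ₜ[R] p.2
        = ∑ p ∈ s.attach, p.1.1 ⊗ₜ[R] p.1.2 := (Finset.sum_attach s _).symm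
      _ = ∑ l, (e l).1.1 ⊗ₜ[R] (e l).1.2 := (Equiv.sum_comp e _).symm
      _ = ∑ l, (e l).1.1 ⊗ₜ[R] (∑ j, a l j • y j) := by
            exact Finset.sum_congr rfl fun l _ ↦ by
              rw [show ((e l).1.2 : M) = x l from rfl, h1 l]
      _ = ∑ j, (∑ l, a l j • (e l).1.1) ⊗ₜ[R] y j := by
            simp_rw [tmul_sum, tmul_smul, smul_tmul', sum_tmul]
            rw [Finset.sum_comm]
      _ = 0 := by simp [key]
end

section
/- Let A be a Noetherian ring and f a nonzerodivisor in A. Let M be a finitely presented A[1/f]-module and M' ⊆ M a finitely generated A-submodule with M' ⊗_A A[1/f] = M. Then ker(M → (lim_n M'/f^n M')[1/f]) = ⋂_{n≥0} f^n M' = ker(M' → lim_n M'/f^n M'). -/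
open Function in
/-- Krull intersection step, within a single universe (so that mathlib's Artin–Rees
applies). -/
private lemma krull_aux {A : Type u} [CommRing A] [IsNoetherianRing A] (f : A) {M : Type u}
    [AddCommGroup M] [Module A M] [Module.Finite A M] (m : M)
    (hm : ∀ n : ℕ, ∃ m'' : M, m = f ^ n • m'') : ∃ b : A, (b * f) • m = m := by
  have hmN : m ∈ (⨅ n : ℕ, (Ideal.span {f}) ^ n • ⊤ : Submodule A M) := by
    rw [Submodule.mem_iInf]
    intro n
    obtain ⟨m'', rfl⟩ := hm n
    rw [Ideal.span_singleton_pow, Submodule.ideal_span_singleton_smul]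
    exact Submodule.smul_mem_pointwise_smul m'' _ ⊤ trivial
  obtain ⟨⟨r, hr⟩, hrm⟩ := (Ideal.mem_iInf_smul_pow_eq_bot_iff (Ideal.span {f}) m).mp hmN
  obtain ⟨b, rfl⟩ := Ideal.mem_span_singleton'.mp hr
  exact ⟨b, hrm⟩

/-- Krull intersection step, universe polymorphic: transfer along a finite presentation. -/
private lemma krull_step {A : Type u} [CommRing A] [IsNoetherianRing A] (f : A) {M : Type v}
    [AddCommGroup M] [Module A M] [Module.Finite A M] (m : M)
    (hm : ∀ n : ℕ, ∃ m'' : M, m = f ^ n • m'') : ∃ b : A, (b * f) • m = m := by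
  obtain ⟨n, π, hπ⟩ := Module.Finite.exists_fin' A M
  let e : ((Fin n → A) ⧸ LinearMap.ker π) ≃ₗ[A] M := π.quotKerEquivOfSurjective hπ
  have hm' : ∀ k : ℕ, ∃ m'' : (Fin n → A) ⧸ LinearMap.ker π, e.symm m = f ^ k • m'' := by
    intro k
    obtain ⟨m'', hm''⟩ := hm k
    exact ⟨e.symm m'', by rw [← map_smul, ← hm'']⟩
  obtain ⟨b, hb⟩ := krull_aux f (e.symm m) hm'
  refine ⟨b, ?_⟩
  have := congrArg e hb
  rwa [map_smul, e.apply_symm_apply] at this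

/-- Let `A` be Noetherian, `f` a nonzerodivisor, `M'` a finitely generated `A`-module on
which `f` acts injectively, and `M = M'[1/f]` its localization at the powers of `f`.
Then the kernel of `M' → lim_n M'/f^n M'` equals `⋂_n f^n M'`, and the kernel of
`M → (lim_n M'/f^n M')[1/f]` equals (the image in `M` of) the same submodule
`⋂_n f^n M'`. -/
theorem ker_to_completion_and_localized_completion (A : Type*) [CommRing A]
    [IsNoetherianRing A] (f : A) (hf : f ∈ nonZeroDivisors A)
    (M' : Type*) [AddCommGroup M'] [Module A M'] [Module.Finite A M']
    (hM' : ∀ m : M', f • m = 0 → m = 0) :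
    -- the kernel of `M' → lim_n M'/f^nM'` is `⋂_n f^n M'`
    (∀ m : M', AdicCompletion.of (Ideal.span {f}) M' m = 0 ↔
      ∀ n : ℕ, ∃ m'' : M', m = f ^ n • m'') ∧
    -- the kernel of `M = M'[1/f] → (lim_n M'/f^nM')[1/f]` is the image of `⋂_n f^n M'`
    (∀ x : LocalizedModule (Submonoid.powers f) M',
      IsLocalizedModule.map (Submonoid.powers f)
          (LocalizedModule.mkLinearMap (Submonoid.powers f) M')
          (LocalizedModule.mkLinearMap (Submonoid.powers f)
            (AdicCompletion (Ideal.span {f}) M'))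
          (AdicCompletion.of (Ideal.span {f}) M') x = 0 ↔
        ∃ m : M', (∀ n : ℕ, ∃ m'' : M', m = f ^ n • m'') ∧
          LocalizedModule.mkLinearMap (Submonoid.powers f) M' m = x) := by
  -- the property "m ∈ ⋂ f^n M'"
  set P : M' → Prop := fun m => ∀ n : ℕ, ∃ m'' : M', m = f ^ n • m'' with hP
  -- kernel of the map to the adic completion
  have hker : ∀ m : M', AdicCompletion.of (Ideal.span {f}) M' m = 0 ↔ P m := by
    intro m
    refine (Subtype.ext_iff.trans funext_iff).trans ?_
    refine forall_congr' fun n => ?_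
    rw [AdicCompletion.of_apply]
    show _ ↔ ∃ m'' : M', m = f ^ n • m''
    have h0 : (0 : AdicCompletion (Ideal.span {f}) M').val n = 0 := rfl
    rw [h0, Submodule.mkQ_apply, Submodule.Quotient.mk_eq_zero, Ideal.span_singleton_pow,
      Submodule.ideal_span_singleton_smul]
    constructor
    · intro h
      rw [← SetLike.mem_coe, Submodule.coe_pointwise_smul, Set.mem_smul_set] at h
      obtain ⟨m'', -, rfl⟩ := h
      exact ⟨m'', rfl⟩
    · rintro ⟨m'', rfl⟩
      exact Submodule.smul_mem_pointwise_smul m'' _ ⊤ trivial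
  -- injectivity of multiplication by powers of f
  have hinj : ∀ (k : ℕ) (a b : M'), f ^ k • a = f ^ k • b → a = b := by
    intro k
    induction k with
    | zero => intro a b h; simpa using h
    | succ k ih =>
      intro a b h
      rw [pow_succ, mul_smul, mul_smul] at h
      have h2 := ih _ _ h
      have h3 : f • (a - b) = 0 := by rw [smul_sub, h2, sub_self]
      have := hM' _ h3
      rwa [sub_eq_zero] at this
  -- Krull intersection step
  have hstep : ∀ m : M', P m → ∃ m₀ : M', P m₀ ∧ m = f • m₀ := by
    intro m hm
    obtain ⟨b, hb⟩ := krull_step f m hm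
    refine ⟨b • m, fun n => ?_, ?_⟩
    · obtain ⟨m'', hm''⟩ := hm n
      exact ⟨b • m'', by rw [hm'', smul_comm]⟩
    · rw [smul_smul, mul_comm]
      exact hb.symm
  have hpow : ∀ (k : ℕ) (m : M'), P m → ∃ m₀ : M', P m₀ ∧ m = f ^ k • m₀ := by
    intro k
    induction k with
    | zero => intro m hm; exact ⟨m, hm, by simp⟩
    | succ k ih =>
      intro m hm
      obtain ⟨m₁, hm₁, rfl⟩ := ih m hm
      obtain ⟨m₀, hm₀, rfl⟩ := hstep m₁ hm₁
      exact ⟨m₀, hm₀, by rw [smul_smul, ← pow_succ]⟩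
  have hkey : ∀ (k : ℕ) (m : M'), P (f ^ k • m) → P m := by
    intro k m hm
    obtain ⟨m₀, hm₀, he⟩ := hpow k _ hm
    rwa [hinj k m m₀ he]
  refine ⟨hker, ?_⟩
  intro x
  constructor
  · intro h
    obtain ⟨⟨m, s⟩, rfl⟩ := IsLocalizedModule.mk'_surjective (Submonoid.powers f)
      (LocalizedModule.mkLinearMap (Submonoid.powers f) M') x
    simp only [Function.uncurry_apply_pair] at h ⊢
    rw [IsLocalizedModule.map_mk', IsLocalizedModule.mk'_eq_zero'] at h
    obtain ⟨s', hs'⟩ := h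
    obtain ⟨j, hj⟩ := s'.2
    have hj' : f ^ j = (s' : A) := hj
    have hofm : AdicCompletion.of (Ideal.span {f}) M' (f ^ j • m) = 0 := by
      rw [map_smul, hj']
      exact hs'
    have hmP : P m := hkey j m ((hker _).mp hofm)
    obtain ⟨k, hk⟩ := s.2
    have hk' : f ^ k = (s : A) := hk
    obtain ⟨m₀, hm₀P, hm₀⟩ := hpow k m hmP
    refine ⟨m₀, hm₀P, ?_⟩
    have hsm : s • m₀ = m := by
      rw [Submonoid.smul_def, ← hk']
      exact hm₀.symm
    rw [← IsLocalizedModule.mk'_cancel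
      (LocalizedModule.mkLinearMap (Submonoid.powers f) M') m₀ s, hsm]
  · rintro ⟨m, hm, rfl⟩
    rw [IsLocalizedModule.map_apply, (hker m).mpr hm, map_zero]
end
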